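/- (Quadratic transformation of higher-order elliptic Selberg integrals, base q² versus base q.) Let n ≥ 1 and let m ≥ 1 be an odd integer. Let p, q ∈ ℂ with 0 < |p| < 1, 0 < |q| < 1, let Q ∈ ℂ with Q² = q, and let u_0, …, u_{m+2} be nonzero complex numbers with |u_r| < 1 for all r, satisfying the balancing condition q^{2n−1} · ∏_{0 ≤ r ≤ m+2} u_r = −(pq)^{(m+1)/2}. Then the unit-torus integrals of the two elliptic Selberg densities agree: ∮_{T^n} Δ^{(n)}(z; u_0, q u_0, u_1, q u_1, …, u_{m+2}, q u_{m+2}; q²; p, q²) = ∮_{T^n} Δ^{(n)}(z; u_0, u_1, …, u_{m+2}, Q, −Q; q; p, q), where on the left the density has 2m+6 parameters (order m), base parameter t = q², and elliptic Gamma functions with bases (p, q²), while on the right it has m+5 parameters (order (m−1)/2), base parameter t = q, and bases (p, q). Under the stated modulus conditions all parameters have modulus < 1, so the unit torus is a valid contour on both sides. -/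

import Mathlib

open Complex MeasureTheory

/-- The elliptic Gamma function `Γ_{a,b}(z) = ∏_{i,j ≥ 0} (1 - a^{i+1} b^{j+1}/z)/(1 - a^i b^j z)`. -/
noncomputable def ellGamma (a b z : ℂ) : ℂ :=
  ∏' ij : ℕ × ℕ, (1 - a ^ (ij.1 + 1) * b ^ (ij.2 + 1) / z) / (1 - a ^ ij.1 * b ^ ij.2 * z)

/-- The infinite Pochhammer symbol `(x; r)_∞ = ∏_{k ≥ 0} (1 - r^k x)`. -/
noncomputable def qPoch (x r : ℂ) : ℂ :=
  ∏' k : ℕ, (1 - r ^ k * x)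

/-- The elliptic Selberg density in `n` variables, with parameter list `u`
(of length `2m+6` for order `m`), base parameter `t`, and elliptic Gamma bases `(a, b)`. -/
noncomputable def selbergDensity (n : ℕ) (u : List ℂ) (t a b : ℂ) (z : Fin n → ℂ) : ℂ :=
  ((qPoch a a * qPoch b b * ellGamma a b t / 2) ^ n / (n.factorial : ℂ)) *
  (∏ i : Fin n, ∏ j : Fin n,
    if i < j then
      (ellGamma a b (t * z i * z j) * ellGamma a b (t * z i / z j) *
        ellGamma a b (t * z j / z i) * ellGamma a b (t / (z i * z j))) /
      (ellGamma a b (z i * z j) * ellGamma a b (z i / z j) *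
        ellGamma a b (z j / z i) * ellGamma a b (1 / (z i * z j)))
    else 1) *
  ∏ i : Fin n,
    (u.map (fun ur => ellGamma a b (ur * z i) * ellGamma a b (ur / z i))).prod /
      (ellGamma a b (z i ^ 2) * ellGamma a b ((z i ^ 2)⁻¹))

/-- Normalized integral over the unit torus `T^n`:
`∮_{T^n} f := ∫_{[0,2π]^n} f(e^{iθ_1},…,e^{iθ_n}) dθ/(2π)^n`. -/
noncomputable def unitTorusIntegral (n : ℕ) (f : (Fin n → ℂ) → ℂ) : ℂ :=
  (1 / (2 * (Real.pi : ℂ)) ^ n) *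
    ∫ θ in Set.univ.pi (fun _ : Fin n => Set.Ioc (0 : ℝ) (2 * Real.pi)),
      f (fun i => Complex.exp (Complex.I * θ i))


open Complex

namespace SelbergAux


variable {ι ι₁ ι₂ : Type*}

lemma hasProd_zero_of {f : ι → ℂ} (i₀ : ι) (h : f i₀ = 0) : HasProd f 0 := by
  have hev : ∀ᶠ s in Filter.atTop, (0 : ℂ) = ∏ i ∈ s, f i := by
    filter_upwards [Filter.eventually_ge_atTop ({i₀} : Finset ι)] with s hs
    exact (Finset.prod_eq_zero (hs (Finset.mem_singleton_self i₀)) h).symm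
  exact Filter.Tendsto.congr' hev tendsto_const_nhds

lemma tprod_eq_zero_of {f : ι → ℂ} (i₀ : ι) (h : f i₀ = 0) : ∏' i, f i = 0 :=
  (hasProd_zero_of i₀ h).tprod_eq

lemma summable_log {f : ι → ℂ} (hs : Summable fun i => ‖f i - 1‖) (h0 : ∀ i, f i ≠ 0) :
    Summable fun i => Complex.log (f i) := by
  have h1 : ∀ᶠ i in Filter.cofinite, ‖f i - 1‖ ≤ 1/2 :=
    hs.tendsto_cofinite_zero.eventually_le_const (by norm_num)
  refine Summable.of_norm_bounded_eventually (g := fun i => (3/2) * ‖f i - 1‖) (hs.mul_left _) ?_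
  filter_upwards [h1] with i hi
  have h2 : ‖Complex.log (1 + (f i - 1))‖ ≤ (3/2) * ‖f i - 1‖ :=
    Complex.norm_log_one_add_half_le_self (by simpa using hi)
  simpa using h2

lemma tprod_ne_zero {f : ι → ℂ} (hs : Summable fun i => ‖f i - 1‖) (h0 : ∀ i, f i ≠ 0) :
    ∏' i, f i ≠ 0 := by
  have := Complex.cexp_tsum_eq_tprod (f := f) h0 (summable_log hs h0)
  rw [← this]
  exact Complex.exp_ne_zero _

lemma multipliable_of {f : ι → ℂ} (hs : Summable fun i => ‖f i - 1‖) : Multipliable f := by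
  by_cases h0 : ∀ i, f i ≠ 0
  · exact Complex.multipliable_of_summable_log (summable_log hs h0)
  · push_neg at h0
    obtain ⟨i₀, h⟩ := h0
    exact ⟨0, hasProd_zero_of i₀ h⟩

lemma tprod_div {f g : ι → ℂ} (hf : Multipliable f) (hg : Multipliable g)
    (h : ∏' i, g i ≠ 0) : ∏' i, (f i / g i) = (∏' i, f i) / (∏' i, g i) := by
  have : HasProd (fun i => f i / g i) ((∏' i, f i) / (∏' i, g i)) := by
    have ht := Filter.Tendsto.div hf.hasProd hg.hasProd h
    refine Filter.Tendsto.congr (fun s => ?_) ht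
    exact (Finset.prod_div_distrib _ _).symm
  exact this.tprod_eq

lemma tprod_split {g₁ : ι₁ → ι} {g₂ : ι₂ → ι} (h₁ : Function.Injective g₁)
    (h₂ : Function.Injective g₂) (hc : Set.range g₂ = (Set.range g₁)ᶜ) {f : ι → ℂ}
    (m₁ : Multipliable (f ∘ g₁)) (m₂ : Multipliable (f ∘ g₂)) :
    ∏' i, f i = (∏' i, f (g₁ i)) * (∏' i, f (g₂ i)) := by
  have H1 : HasProd (f ∘ (↑) : Set.range g₁ → ℂ) (∏' i, f (g₁ i)) :=
    h₁.hasProd_range_iff.2 m₁.hasProd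
  have H2 : HasProd (f ∘ (↑) : ((Set.range g₁)ᶜ : Set ι) → ℂ) (∏' i, f (g₂ i)) := by
    rw [← hc]
    exact h₂.hasProd_range_iff.2 m₂.hasProd
  exact (H1.mul_compl H2).tprod_eq



/-- The double theta-type product `∏_{i,j≥0} (1 - a^i b^j x)`. -/
noncomputable def dTheta (a b x : ℂ) : ℂ :=
  ∏' ij : ℕ × ℕ, (1 - a ^ ij.1 * b ^ ij.2 * x)

variable {a b x : ℂ}

lemma dTheta_summable (ha : ‖a‖ < 1) (hb : ‖b‖ < 1) (x : ℂ) :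
    Summable fun ij : ℕ × ℕ => ‖(1 - a ^ ij.1 * b ^ ij.2 * x) - 1‖ := by
  have h : ∀ ij : ℕ × ℕ, ‖(1 - a ^ ij.1 * b ^ ij.2 * x) - 1‖ = ‖a‖ ^ ij.1 * (‖b‖ ^ ij.2 * ‖x‖) := by
    intro ij
    rw [sub_sub_cancel_left, norm_neg, norm_mul, norm_mul, norm_pow, norm_pow, mul_assoc]
  rw [funext h]
  exact Summable.mul_of_nonneg (f := fun i : ℕ => ‖a‖ ^ i) (g := fun j : ℕ => ‖b‖ ^ j * ‖x‖)
    (summable_geometric_of_lt_one (norm_nonneg a) ha)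
    ((summable_geometric_of_lt_one (norm_nonneg b) hb).mul_right ‖x‖)
    (fun i => pow_nonneg (norm_nonneg a) i)
    (fun j => mul_nonneg (pow_nonneg (norm_nonneg b) j) (norm_nonneg x))

lemma dTheta_multipliable (ha : ‖a‖ < 1) (hb : ‖b‖ < 1) (x : ℂ) :
    Multipliable fun ij : ℕ × ℕ => (1 - a ^ ij.1 * b ^ ij.2 * x) :=
  multipliable_of (dTheta_summable ha hb x)

lemma factor_ne_one (ha : ‖a‖ < 1) (hb : ‖b‖ < 1) (hx : ‖x‖ < 1) (i j : ℕ) :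
    a ^ i * b ^ j * x ≠ 1 := by
  intro h
  have h3 : ‖a ^ i * b ^ j * x‖ = 1 := by rw [h]; simp
  rw [norm_mul, norm_mul, norm_pow, norm_pow] at h3
  have h1 : ‖a‖ ^ i ≤ 1 := pow_le_one₀ (norm_nonneg a) ha.le
  have h2 : ‖b‖ ^ j ≤ 1 := pow_le_one₀ (norm_nonneg b) hb.le
  have hbx : ‖b‖ ^ j * ‖x‖ ≤ ‖x‖ := mul_le_of_le_one_left (norm_nonneg x) h2
  have h4 : ‖a‖ ^ i * (‖b‖ ^ j * ‖x‖) ≤ ‖x‖ :=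
    le_trans (mul_le_of_le_one_left (by positivity) h1) hbx
  rw [← mul_assoc] at h4
  linarith

lemma dTheta_ne_zero (ha : ‖a‖ < 1) (hb : ‖b‖ < 1) (hx : ‖x‖ < 1) : dTheta a b x ≠ 0 := by
  refine tprod_ne_zero (dTheta_summable ha hb x) (fun ij => ?_)
  rw [sub_ne_zero]
  exact fun h => factor_ne_one ha hb hx ij.1 ij.2 h.symm

lemma dTheta_swap (a b x : ℂ) : dTheta a b x = dTheta b a x := by
  unfold dTheta
  refine (tprod_congr (fun ij : ℕ × ℕ => ?_)).trans
    (Equiv.tprod_eq (Equiv.prodComm ℕ ℕ) (f := fun ij : ℕ × ℕ => 1 - b ^ ij.1 * a ^ ij.2 * x))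
  simp [mul_comm]

/-- Duplication in the second base. -/
lemma dTheta_dup (ha : ‖a‖ < 1) (hb : ‖b‖ < 1) (x : ℂ) :
    dTheta a b x = dTheta a (b ^ 2) x * dTheta a (b ^ 2) (b * x) := by
  have hb2 : ‖b ^ 2‖ < 1 := by
    rw [norm_pow]
    exact pow_lt_one₀ (norm_nonneg b) hb (by norm_num)
  set f : ℕ × ℕ → ℂ := fun ij => 1 - a ^ ij.1 * b ^ ij.2 * x with hf
  have h₁ : Function.Injective (fun ij : ℕ × ℕ => (ij.1, 2 * ij.2)) := by
    intro x y h
    simp only [Prod.mk.injEq] at h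
    exact Prod.ext h.1 (by omega)
  have h₂ : Function.Injective (fun ij : ℕ × ℕ => (ij.1, 2 * ij.2 + 1)) := by
    intro x y h
    simp only [Prod.mk.injEq] at h
    exact Prod.ext h.1 (by omega)
  have hc : Set.range (fun ij : ℕ × ℕ => (ij.1, 2 * ij.2 + 1)) =
      (Set.range (fun ij : ℕ × ℕ => (ij.1, 2 * ij.2)))ᶜ := by
    ext ⟨i, j⟩
    simp only [Set.mem_range, Set.mem_compl_iff, Prod.mk.injEq, Prod.exists, not_exists]
    constructor
    · rintro ⟨k, l, hk, hl⟩ k' l' ⟨hk', hl'⟩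
      omega
    · intro h
      rcases Nat.even_or_odd j with ⟨l, hl⟩ | ⟨l, hl⟩
      · exact absurd ⟨rfl, by omega⟩ (h i l)
      · exact ⟨i, l, rfl, by omega⟩
  have e₁ : (f ∘ fun ij : ℕ × ℕ => (ij.1, 2 * ij.2)) =
      fun ij : ℕ × ℕ => 1 - a ^ ij.1 * (b ^ 2) ^ ij.2 * x := by
    funext ij
    simp only [Function.comp, hf, ← pow_mul]
  have e₂ : (f ∘ fun ij : ℕ × ℕ => (ij.1, 2 * ij.2 + 1)) =
      fun ij : ℕ × ℕ => 1 - a ^ ij.1 * (b ^ 2) ^ ij.2 * (b * x) := by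
    funext ij
    simp only [Function.comp, hf, ← pow_mul, pow_succ]
    ring_nf
  have := tprod_split h₁ h₂ hc (f := f)
    (by rw [e₁]; exact dTheta_multipliable ha hb2 x)
    (by rw [e₂]; exact dTheta_multipliable ha hb2 (b * x))
  unfold dTheta
  rw [show (∏' ij : ℕ × ℕ, (1 - a ^ ij.1 * b ^ ij.2 * x)) = ∏' ij, f ij from rfl, this]
  congr 1
  · rw [← e₁]; rfl
  · rw [← e₂]; rfl

/-- Duplication in the first base. -/
lemma dTheta_dup' (ha : ‖a‖ < 1) (hb : ‖b‖ < 1) (x : ℂ) :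
    dTheta a b x = dTheta (a ^ 2) b x * dTheta (a ^ 2) b (a * x) := by
  rw [dTheta_swap, dTheta_dup hb ha x, dTheta_swap (a^2) b x, dTheta_swap (a^2) b (a*x)]

/-- `(1-w)(1+w) = 1-w²` product form. -/
lemma dTheta_sq (ha : ‖a‖ < 1) (hb : ‖b‖ < 1) (x : ℂ) :
    dTheta a b x * dTheta a b (-x) = dTheta (a ^ 2) (b ^ 2) (x ^ 2) := by
  unfold dTheta
  rw [← Multipliable.tprod_mul (dTheta_multipliable ha hb x) (dTheta_multipliable ha hb (-x))]
  apply tprod_congr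
  intro ij
  rw [← pow_mul, ← pow_mul, pow_mul', pow_mul']
  ring

lemma qPoch_summable {r : ℂ} (hr : ‖r‖ < 1) (x : ℂ) :
    Summable fun k : ℕ => ‖(1 - r ^ k * x) - 1‖ := by
  have h : ∀ k : ℕ, ‖(1 - r ^ k * x) - 1‖ = ‖r‖ ^ k * ‖x‖ := by
    intro k
    rw [sub_sub_cancel_left, norm_neg, norm_mul, norm_pow]
  rw [funext h]
  exact (summable_geometric_of_lt_one (norm_nonneg r) hr).mul_right ‖x‖

lemma qPoch_multipliable {r : ℂ} (hr : ‖r‖ < 1) (x : ℂ) :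
    Multipliable fun k : ℕ => (1 - r ^ k * x) :=
  multipliable_of (qPoch_summable hr x)

lemma qPoch_ne_zero {r x : ℂ} (hr : ‖r‖ < 1) (hx : ‖x‖ < 1) : qPoch x r ≠ 0 := by
  refine tprod_ne_zero (qPoch_summable hr x) (fun k => ?_)
  rw [sub_ne_zero]
  intro h
  have h1 : ‖r ^ k * x‖ < 1 := by
    rw [norm_mul, norm_pow]
    calc ‖r‖ ^ k * ‖x‖ ≤ 1 * ‖x‖ :=
          mul_le_mul_of_nonneg_right (pow_le_one₀ (norm_nonneg r) hr.le) (norm_nonneg x)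
      _ = ‖x‖ := one_mul _
      _ < 1 := hx
  rw [← h] at h1
  simp at h1

/-- Splitting off the `i = 0` row. -/
lemma dTheta_row (ha : ‖a‖ < 1) (hb : ‖b‖ < 1) (x : ℂ) :
    dTheta a b x = qPoch x b * dTheta a b (a * x) := by
  set f : ℕ × ℕ → ℂ := fun ij => 1 - a ^ ij.1 * b ^ ij.2 * x with hf
  have h₁ : Function.Injective (fun j : ℕ => ((0 : ℕ), j)) := by
    intro x y h; simpa using h
  have h₂ : Function.Injective (fun ij : ℕ × ℕ => (ij.1 + 1, ij.2)) := by
    intro x y h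
    simp only [Prod.mk.injEq] at h
    exact Prod.ext (by omega) h.2
  have hc : Set.range (fun ij : ℕ × ℕ => (ij.1 + 1, ij.2)) =
      (Set.range (fun j : ℕ => ((0 : ℕ), j)))ᶜ := by
    ext ⟨i, j⟩
    simp only [Set.mem_range, Set.mem_compl_iff, Prod.mk.injEq, Prod.exists, not_exists]
    constructor
    · rintro ⟨k, l, hk, hl⟩ k'  ⟨hk', hl'⟩
      omega
    · intro h
      cases i with
      | zero => exact absurd ⟨rfl, rfl⟩ (h j)
      | succ i => exact ⟨i, j, rfl, rfl⟩
  have e₁ : (f ∘ fun j : ℕ => ((0 : ℕ), j)) = fun j : ℕ => 1 - b ^ j * x := by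
    funext j
    simp [hf]
  have e₂ : (f ∘ fun ij : ℕ × ℕ => (ij.1 + 1, ij.2)) =
      fun ij : ℕ × ℕ => 1 - a ^ ij.1 * b ^ ij.2 * (a * x) := by
    funext ij
    simp only [Function.comp, hf, pow_succ]
    ring_nf
  have := tprod_split h₁ h₂ hc (f := f)
    (by rw [e₁]; exact qPoch_multipliable hb x)
    (by rw [e₂]; exact dTheta_multipliable ha hb (a * x))
  unfold dTheta qPoch
  rw [show (∏' ij : ℕ × ℕ, (1 - a ^ ij.1 * b ^ ij.2 * x)) = ∏' ij, f ij from rfl, this]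
  congr 1
  · rw [← e₁]; rfl
  · rw [← e₂]; rfl

/-- Splitting off the `j = 0` column. -/
lemma dTheta_col (ha : ‖a‖ < 1) (hb : ‖b‖ < 1) (x : ℂ) :
    dTheta a b x = qPoch x a * dTheta a b (b * x) := by
  rw [dTheta_swap, dTheta_row hb ha x, dTheta_swap b a (b * x)]

/-- The elliptic Gamma function as a ratio of double thetas. -/
lemma ellGamma_eq_dTheta (ha : ‖a‖ < 1) (hb : ‖b‖ < 1) (z : ℂ) :
    ellGamma a b z = dTheta a b (a * b / z) / dTheta a b z := by
  by_cases h0 : ∀ ij : ℕ × ℕ, (1 - a ^ ij.1 * b ^ ij.2 * z) ≠ 0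
  · have hnum : ∀ ij : ℕ × ℕ, (1 - a ^ (ij.1 + 1) * b ^ (ij.2 + 1) / z) =
        (1 - a ^ ij.1 * b ^ ij.2 * (a * b / z)) := by
      intro ij
      rw [pow_succ, pow_succ]
      ring_nf
    have hd : dTheta a b z ≠ 0 := by
      refine tprod_ne_zero (dTheta_summable ha hb z) h0
    unfold ellGamma
    have : (fun ij : ℕ × ℕ => (1 - a ^ (ij.1 + 1) * b ^ (ij.2 + 1) / z) /
        (1 - a ^ ij.1 * b ^ ij.2 * z)) =
        fun ij : ℕ × ℕ => (1 - a ^ ij.1 * b ^ ij.2 * (a * b / z)) /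
        (1 - a ^ ij.1 * b ^ ij.2 * z) := by
      funext ij; rw [hnum ij]
    rw [this]
    exact tprod_div (dTheta_multipliable ha hb _) (dTheta_multipliable ha hb z) hd
  · push_neg at h0
    obtain ⟨ij, hij⟩ := h0
    have h1 : dTheta a b z = 0 := tprod_eq_zero_of ij hij
    have h2 : ellGamma a b z = 0 := by
      unfold ellGamma
      refine tprod_eq_zero_of ij ?_
      rw [hij, div_zero]
    rw [h1, h2, div_zero]

end SelbergAux

section Layer3
open Complex SelbergAux

variable {p q : ℂ}

namespace SelbergAux

lemma norm_mul_lt_one {a b : ℂ} (ha : ‖a‖ < 1) (hb : ‖b‖ < 1) : ‖a * b‖ < 1 := by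
  rw [norm_mul]
  calc ‖a‖ * ‖b‖ ≤ ‖b‖ := mul_le_of_le_one_left (norm_nonneg b) ha.le
    _ < 1 := hb

lemma norm_div_circ {c s : ℂ} (hs : ‖s‖ = 1) : ‖c / s‖ = ‖c‖ := by
  rw [norm_div, hs, div_one]

lemma norm_mul_circ {c s : ℂ} (hs : ‖s‖ = 1) : ‖c * s‖ = ‖c‖ := by
  rw [norm_mul, hs, mul_one]

lemma norm_sq_lt_one {a : ℂ} (ha : ‖a‖ < 1) : ‖a ^ 2‖ < 1 := by
  rw [norm_pow]
  exact pow_lt_one₀ (norm_nonneg a) ha (by norm_num)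

lemma gammaL_eq (hp : ‖p‖ < 1) (hq : ‖q‖ < 1) (s : ℂ) :
    ellGamma p (q ^ 2) s = dTheta p (q ^ 2) (p * q ^ 2 / s) / dTheta p (q ^ 2) s :=
  ellGamma_eq_dTheta hp (norm_sq_lt_one hq) s

lemma gammaR_eq (hp : ‖p‖ < 1) (hq : ‖q‖ < 1) (s : ℂ) :
    ellGamma p q s = (dTheta p (q ^ 2) (p * q / s) * dTheta p (q ^ 2) (p * q ^ 2 / s)) /
      (dTheta p (q ^ 2) s * dTheta p (q ^ 2) (q * s)) := by
  rw [ellGamma_eq_dTheta hp hq s, dTheta_dup hp hq (p * q / s), dTheta_dup hp hq s,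
    show q * (p * q / s) = p * q ^ 2 / s from by ring]

lemma gammaL_shift (hp : ‖p‖ < 1) (hq : ‖q‖ < 1) (hq0 : q ≠ 0) (s : ℂ) :
    ellGamma p (q ^ 2) (q ^ 2 * s) = dTheta p (q ^ 2) (p / s) / dTheta p (q ^ 2) (q ^ 2 * s) := by
  rw [gammaL_eq hp hq, show p * q ^ 2 / (q ^ 2 * s) = p / s from by
    rw [show p * q ^ 2 = q ^ 2 * p from by ring, mul_div_mul_left _ _ (pow_ne_zero 2 hq0)]]

lemma gammaR_shift (hp : ‖p‖ < 1) (hq : ‖q‖ < 1) (hq0 : q ≠ 0) (s : ℂ) :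
    ellGamma p q (q * s) = (dTheta p (q ^ 2) (p / s) * dTheta p (q ^ 2) (p * q / s)) /
      (dTheta p (q ^ 2) (q * s) * dTheta p (q ^ 2) (q ^ 2 * s)) := by
  rw [gammaR_eq hp hq (q * s),
    show p * q / (q * s) = p / s from by
      rw [show p * q = q * p from by ring, mul_div_mul_left _ _ hq0],
    show p * q ^ 2 / (q * s) = p * q / s from by
      rw [show p * q ^ 2 = q * (p * q) from by ring, mul_div_mul_left _ _ hq0],
    show q * (q * s) = q ^ 2 * s from by ring]

lemma gamma_dup (hp : ‖p‖ < 1) (hq : ‖q‖ < 1) (hq0 : q ≠ 0) (s : ℂ) :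
    ellGamma p q s = ellGamma p (q ^ 2) s * ellGamma p (q ^ 2) (q * s) := by
  rw [gammaR_eq hp hq s, gammaL_eq hp hq s, gammaL_eq hp hq (q * s),
    show p * q ^ 2 / (q * s) = p * q / s from by
      rw [show p * q ^ 2 = q * (p * q) from by ring, mul_div_mul_left _ _ hq0]]
  ring

lemma poch_gamma {a b : ℂ} (ha : ‖a‖ < 1) (hb : ‖b‖ < 1) (hb0 : b ≠ 0) :
    qPoch b b * ellGamma a b b = qPoch a a := by
  have hab : ‖a * b‖ < 1 := norm_mul_lt_one ha hb
  rw [ellGamma_eq_dTheta ha hb b, mul_div_cancel_right₀ a hb0, dTheta_col ha hb a,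
    dTheta_row ha hb b, show b * a = a * b from mul_comm b a]
  have h1 : dTheta a b (a * b) ≠ 0 := dTheta_ne_zero ha hb hab
  have h2 : qPoch b b ≠ 0 := qPoch_ne_zero hb hb
  field_simp

lemma alg_cross (A₁ A₂ A₃ A₄ B₁ B₂ B₃ B₄ C₁ C₂ C₃ C₄ D₁ D₂ D₃ D₄ E₁ E₂ E₃ E₄ F₁ F₂ F₃ F₄ : ℂ)
    (hB₁ : B₁ ≠ 0) (hB₂ : B₂ ≠ 0) (hB₃ : B₃ ≠ 0) (hB₄ : B₄ ≠ 0)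
    (hE₁ : E₁ ≠ 0) (hE₂ : E₂ ≠ 0) (hE₃ : E₃ ≠ 0) (hE₄ : E₄ ≠ 0) :
    (A₁/F₁ * (A₂/F₂) * (A₃/F₃) * (A₄/F₄)) / (C₁/D₁ * (C₂/D₂) * (C₃/D₃) * (C₄/D₄)) =
    (A₁*B₁/(E₁*F₁) * (A₂*B₂/(E₂*F₂)) * (A₃*B₃/(E₃*F₃)) * (A₄*B₄/(E₄*F₄))) /
    (B₁*C₁/(D₁*E₁) * (B₂*C₂/(D₂*E₂)) * (B₃*C₃/(D₃*E₃)) * (B₄*C₄/(D₄*E₄))) := by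
  have key : (A₁*B₁/(E₁*F₁) * (A₂*B₂/(E₂*F₂)) * (A₃*B₃/(E₃*F₃)) * (A₄*B₄/(E₄*F₄))) /
      (B₁*C₁/(D₁*E₁) * (B₂*C₂/(D₂*E₂)) * (B₃*C₃/(D₃*E₃)) * (B₄*C₄/(D₄*E₄))) =
      ((A₁/F₁ * (A₂/F₂) * (A₃/F₃) * (A₄/F₄)) / (C₁/D₁ * (C₂/D₂) * (C₃/D₃) * (C₄/D₄))) *
      ((B₁*B₁⁻¹) * (B₂*B₂⁻¹) * (B₃*B₃⁻¹) * (B₄*B₄⁻¹) *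
       ((E₁*E₁⁻¹) * (E₂*E₂⁻¹) * (E₃*E₃⁻¹) * (E₄*E₄⁻¹))) := by
    ring_nf
    simp only [inv_inv]
    ring
  rw [eq_comm, key, mul_inv_cancel₀ hB₁, mul_inv_cancel₀ hB₂, mul_inv_cancel₀ hB₃,
    mul_inv_cancel₀ hB₄, mul_inv_cancel₀ hE₁, mul_inv_cancel₀ hE₂, mul_inv_cancel₀ hE₃,
    mul_inv_cancel₀ hE₄]
  norm_num

lemma alg_peri (a a' b e e' f C C' D D' : ℂ) (ha : a ≠ 0) (ha' : a' ≠ 0) (hb : b ≠ 0)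
    (he : e ≠ 0) (he' : e' ≠ 0) (hf : f ≠ 0) :
    1 / ((C/D) * (C'/D')) =
    ((a/e) * (a'/e')) / ((((b*a)*C)/(D*(e*f))) * (((f*a')*C')/(D'*(e'*b)))) := by
  have key : ((a/e) * (a'/e')) / ((((b*a)*C)/(D*(e*f))) * (((f*a')*C')/(D'*(e'*b)))) =
      (1 / ((C/D) * (C'/D'))) *
      ((a*a⁻¹) * (a'*a'⁻¹) * (b*b⁻¹) * (e*e⁻¹) * (e'*e'⁻¹) * (f*f⁻¹)) := by
    ring_nf
    simp only [inv_inv]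
    ring
  rw [eq_comm, key, mul_inv_cancel₀ ha, mul_inv_cancel₀ ha', mul_inv_cancel₀ hb,
    mul_inv_cancel₀ he, mul_inv_cancel₀ he', mul_inv_cancel₀ hf]
  norm_num

end SelbergAux
end Layer3
section Layer4
open Complex SelbergAux

namespace SelbergAux

variable {p q Q : ℂ}

lemma cross_eq (hp : ‖p‖ < 1) (hq : ‖q‖ < 1) (hq0 : q ≠ 0) (x y : ℂ)
    (hx : ‖x‖ = 1) (hy : ‖y‖ = 1) :
    (ellGamma p (q ^ 2) (q ^ 2 * x * y) * ellGamma p (q ^ 2) (q ^ 2 * x / y) *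
      ellGamma p (q ^ 2) (q ^ 2 * y / x) * ellGamma p (q ^ 2) (q ^ 2 / (x * y))) /
    (ellGamma p (q ^ 2) (x * y) * ellGamma p (q ^ 2) (x / y) *
      ellGamma p (q ^ 2) (y / x) * ellGamma p (q ^ 2) (1 / (x * y))) =
    (ellGamma p q (q * x * y) * ellGamma p q (q * x / y) *
      ellGamma p q (q * y / x) * ellGamma p q (q / (x * y))) /
    (ellGamma p q (x * y) * ellGamma p q (x / y) *
      ellGamma p q (y / x) * ellGamma p q (1 / (x * y))) := by
  have hs₁ : ‖x * y‖ = 1 := by rw [norm_mul, hx, hy, mul_one]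
  have hs₂ : ‖x / y‖ = 1 := by rw [norm_div, hx, hy, div_one]
  have hs₃ : ‖y / x‖ = 1 := by rw [norm_div, hx, hy, div_one]
  have hs₄ : ‖1 / (x * y)‖ = 1 := by rw [norm_div, hs₁, norm_one, div_one]
  have hpq : ‖p * q‖ < 1 := norm_mul_lt_one hp hq
  -- nonzero facts
  have hB₁ : dTheta p (q ^ 2) (p * q / (x * y)) ≠ 0 :=
    dTheta_ne_zero hp (norm_sq_lt_one hq) (by rw [norm_div_circ hs₁]; exact hpq)
  have hB₂ : dTheta p (q ^ 2) (p * q / (x / y)) ≠ 0 :=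
    dTheta_ne_zero hp (norm_sq_lt_one hq) (by rw [norm_div_circ hs₂]; exact hpq)
  have hB₃ : dTheta p (q ^ 2) (p * q / (y / x)) ≠ 0 :=
    dTheta_ne_zero hp (norm_sq_lt_one hq) (by rw [norm_div_circ hs₃]; exact hpq)
  have hB₄ : dTheta p (q ^ 2) (p * q / (1 / (x * y))) ≠ 0 :=
    dTheta_ne_zero hp (norm_sq_lt_one hq) (by rw [norm_div_circ hs₄]; exact hpq)
  have hE₁ : dTheta p (q ^ 2) (q * (x * y)) ≠ 0 :=
    dTheta_ne_zero hp (norm_sq_lt_one hq) (by rw [norm_mul_circ hs₁]; exact hq)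
  have hE₂ : dTheta p (q ^ 2) (q * (x / y)) ≠ 0 :=
    dTheta_ne_zero hp (norm_sq_lt_one hq) (by rw [norm_mul_circ hs₂]; exact hq)
  have hE₃ : dTheta p (q ^ 2) (q * (y / x)) ≠ 0 :=
    dTheta_ne_zero hp (norm_sq_lt_one hq) (by rw [norm_mul_circ hs₃]; exact hq)
  have hE₄ : dTheta p (q ^ 2) (q * (1 / (x * y))) ≠ 0 :=
    dTheta_ne_zero hp (norm_sq_lt_one hq) (by rw [norm_mul_circ hs₄]; exact hq)
  rw [show q ^ 2 * x * y = q ^ 2 * (x * y) from by ring,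
    show q ^ 2 * x / y = q ^ 2 * (x / y) from by ring,
    show q ^ 2 * y / x = q ^ 2 * (y / x) from by ring,
    show q ^ 2 / (x * y) = q ^ 2 * (1 / (x * y)) from by ring,
    show q * x * y = q * (x * y) from by ring,
    show q * x / y = q * (x / y) from by ring,
    show q * y / x = q * (y / x) from by ring,
    show q / (x * y) = q * (1 / (x * y)) from by ring,
    gammaL_shift hp hq hq0 (x * y), gammaL_shift hp hq hq0 (x / y),
    gammaL_shift hp hq hq0 (y / x), gammaL_shift hp hq hq0 (1 / (x * y)),
    gammaL_eq hp hq (x * y), gammaL_eq hp hq (x / y),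
    gammaL_eq hp hq (y / x), gammaL_eq hp hq (1 / (x * y)),
    gammaR_shift hp hq hq0 (x * y), gammaR_shift hp hq hq0 (x / y),
    gammaR_shift hp hq hq0 (y / x), gammaR_shift hp hq hq0 (1 / (x * y)),
    gammaR_eq hp hq (x * y), gammaR_eq hp hq (x / y),
    gammaR_eq hp hq (y / x), gammaR_eq hp hq (1 / (x * y))]
  exact alg_cross _ _ _ _ _ _ _ _ _ _ _ _ _ _ _ _ _ _ _ _ _ _ _ _
    hB₁ hB₂ hB₃ hB₄ hE₁ hE₂ hE₃ hE₄

lemma peri_eq (hp : ‖p‖ < 1) (hq : ‖q‖ < 1) (hq0 : q ≠ 0) (hQ : Q ^ 2 = q)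
    (z : ℂ) (hz : ‖z‖ = 1) :
    1 / (ellGamma p (q ^ 2) (z ^ 2) * ellGamma p (q ^ 2) ((z ^ 2)⁻¹)) =
    (ellGamma p q (Q * z) * ellGamma p q (Q / z) *
      (ellGamma p q (-Q * z) * ellGamma p q (-Q / z))) /
    (ellGamma p q (z ^ 2) * ellGamma p q ((z ^ 2)⁻¹)) := by
  have hz0 : z ≠ 0 := by
    intro h; rw [h] at hz; simp at hz
  have hz20 : z ^ 2 ≠ 0 := pow_ne_zero 2 hz0
  have hz2 : ‖z ^ 2‖ = 1 := by rw [norm_pow, hz, one_pow]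
  have hz2i : ‖(z ^ 2)⁻¹‖ = 1 := by rw [norm_inv, hz2, inv_one]
  have hp2 : ‖p ^ 2‖ < 1 := norm_sq_lt_one hp
  have hq2 : ‖q ^ 2‖ < 1 := norm_sq_lt_one hq
  have hpq : ‖p * q‖ < 1 := norm_mul_lt_one hp hq
  have hp2q : ‖p ^ 2 * q‖ < 1 := norm_mul_lt_one hp2 hq
  have hpq2 : ‖p * q ^ 2‖ < 1 := norm_mul_lt_one hp hq2
  -- the two ± pairs
  have hQz : ellGamma p q (Q * z) * ellGamma p q (-Q * z) =
      dTheta (p ^ 2) (q ^ 2) (p ^ 2 * q / z ^ 2) / dTheta (p ^ 2) (q ^ 2) (q * z ^ 2) := by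
    rw [ellGamma_eq_dTheta hp hq (Q * z), ellGamma_eq_dTheta hp hq (-Q * z),
      div_mul_div_comm,
      show p * q / (-Q * z) = -(p * q / (Q * z)) from by ring,
      show -Q * z = -(Q * z) from by ring,
      dTheta_sq hp hq (p * q / (Q * z)), dTheta_sq hp hq (Q * z),
      show (p * q / (Q * z)) ^ 2 = p ^ 2 * q / z ^ 2 from by
        rw [div_pow, mul_pow Q z, hQ, show (p * q) ^ 2 = q * (p ^ 2 * q) from by ring,
          show q * z ^ 2 = q * z ^ 2 from rfl, mul_div_mul_left _ _ hq0],
      show (Q * z) ^ 2 = q * z ^ 2 from by rw [mul_pow, hQ]]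
  have hQz' : ellGamma p q (Q / z) * ellGamma p q (-Q / z) =
      dTheta (p ^ 2) (q ^ 2) (p ^ 2 * q * z ^ 2) / dTheta (p ^ 2) (q ^ 2) (q / z ^ 2) := by
    rw [ellGamma_eq_dTheta hp hq (Q / z), ellGamma_eq_dTheta hp hq (-Q / z),
      div_mul_div_comm,
      show p * q / (-Q / z) = -(p * q / (Q / z)) from by ring,
      show -Q / z = -(Q / z) from by ring,
      dTheta_sq hp hq (p * q / (Q / z)), dTheta_sq hp hq (Q / z),
      show (p * q / (Q / z)) ^ 2 = p ^ 2 * q * z ^ 2 from by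
        rw [div_pow, div_pow Q z, hQ]
        field_simp,
      show (Q / z) ^ 2 = q / z ^ 2 from by rw [div_pow, hQ]]
  -- expand the four base-q gammas
  have hL1 : ellGamma p (q ^ 2) (z ^ 2) =
      dTheta p (q ^ 2) (p * q ^ 2 / z ^ 2) / dTheta p (q ^ 2) (z ^ 2) :=
    gammaL_eq hp hq (z ^ 2)
  have hL2 : ellGamma p (q ^ 2) ((z ^ 2)⁻¹) =
      dTheta p (q ^ 2) (p * q ^ 2 * z ^ 2) / dTheta p (q ^ 2) ((z ^ 2)⁻¹) := by
    rw [gammaL_eq hp hq ((z ^ 2)⁻¹), show p * q ^ 2 / (z ^ 2)⁻¹ = p * q ^ 2 * z ^ 2 from by rw [div_eq_mul_inv, inv_inv]]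
  have hR1 : ellGamma p q (z ^ 2) =
      ((dTheta (p ^ 2) (q ^ 2) (p * q / z ^ 2) * dTheta (p ^ 2) (q ^ 2) (p ^ 2 * q / z ^ 2)) *
        dTheta p (q ^ 2) (p * q ^ 2 / z ^ 2)) /
      (dTheta p (q ^ 2) (z ^ 2) *
        (dTheta (p ^ 2) (q ^ 2) (q * z ^ 2) * dTheta (p ^ 2) (q ^ 2) (p * q * z ^ 2))) := by
    rw [gammaR_eq hp hq (z ^ 2), dTheta_dup' hp hq2 (p * q / z ^ 2),
      dTheta_dup' hp hq2 (q * z ^ 2),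
      show p * (p * q / z ^ 2) = p ^ 2 * q / z ^ 2 from by ring,
      show p * (q * z ^ 2) = p * q * z ^ 2 from by ring]
  have hR2 : ellGamma p q ((z ^ 2)⁻¹) =
      ((dTheta (p ^ 2) (q ^ 2) (p * q * z ^ 2) * dTheta (p ^ 2) (q ^ 2) (p ^ 2 * q * z ^ 2)) *
        dTheta p (q ^ 2) (p * q ^ 2 * z ^ 2)) /
      (dTheta p (q ^ 2) ((z ^ 2)⁻¹) *
        (dTheta (p ^ 2) (q ^ 2) (q / z ^ 2) * dTheta (p ^ 2) (q ^ 2) (p * q / z ^ 2))) := by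
    rw [gammaR_eq hp hq ((z ^ 2)⁻¹),
      show p * q / (z ^ 2)⁻¹ = p * q * z ^ 2 from by rw [div_eq_mul_inv, inv_inv],
      show p * q ^ 2 / (z ^ 2)⁻¹ = p * q ^ 2 * z ^ 2 from by rw [div_eq_mul_inv, inv_inv],
      show q * (z ^ 2)⁻¹ = q / z ^ 2 from (div_eq_mul_inv q (z ^ 2)).symm,
      dTheta_dup' hp hq2 (p * q * z ^ 2), dTheta_dup' hp hq2 (q / z ^ 2),
      show p * (p * q * z ^ 2) = p ^ 2 * q * z ^ 2 from by ring,
      show p * (q / z ^ 2) = p * q / z ^ 2 from by ring]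
  rw [show ellGamma p q (Q * z) * ellGamma p q (Q / z) *
      (ellGamma p q (-Q * z) * ellGamma p q (-Q / z)) =
      (ellGamma p q (Q * z) * ellGamma p q (-Q * z)) *
      (ellGamma p q (Q / z) * ellGamma p q (-Q / z)) from by ring,
    hQz, hQz', hL1, hL2, hR1, hR2]
  have ha : dTheta (p ^ 2) (q ^ 2) (p ^ 2 * q / z ^ 2) ≠ 0 :=
    dTheta_ne_zero hp2 hq2 (by rw [norm_div_circ hz2]; exact hp2q)
  have ha' : dTheta (p ^ 2) (q ^ 2) (p ^ 2 * q * z ^ 2) ≠ 0 :=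
    dTheta_ne_zero hp2 hq2 (by rw [norm_mul_circ hz2]; exact hp2q)
  have hb : dTheta (p ^ 2) (q ^ 2) (p * q / z ^ 2) ≠ 0 :=
    dTheta_ne_zero hp2 hq2 (by rw [norm_div_circ hz2]; exact hpq)
  have he : dTheta (p ^ 2) (q ^ 2) (q * z ^ 2) ≠ 0 :=
    dTheta_ne_zero hp2 hq2 (by rw [norm_mul_circ hz2]; exact hq)
  have he' : dTheta (p ^ 2) (q ^ 2) (q / z ^ 2) ≠ 0 :=
    dTheta_ne_zero hp2 hq2 (by rw [norm_div_circ hz2]; exact hq)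
  have hf : dTheta (p ^ 2) (q ^ 2) (p * q * z ^ 2) ≠ 0 :=
    dTheta_ne_zero hp2 hq2 (by rw [norm_mul_circ hz2]; exact hpq)
  exact alg_peri _ _ _ _ _ _ _ _ _ _ ha ha' hb he he' hf

end SelbergAux
end Layer4
section Layer5
open Complex SelbergAux

namespace SelbergAux

variable {p q Q : ℂ}

lemma prefactor_eq (hp : ‖p‖ < 1) (hq : ‖q‖ < 1) (hq0 : q ≠ 0) :
    qPoch p p * qPoch (q ^ 2) (q ^ 2) * ellGamma p (q ^ 2) (q ^ 2) =
    qPoch p p * qPoch q q * ellGamma p q q := by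
  rw [mul_assoc, mul_assoc, poch_gamma hp (norm_sq_lt_one hq) (pow_ne_zero 2 hq0),
    poch_gamma hp hq hq0]

lemma density_eq (hp : ‖p‖ < 1) (hq : ‖q‖ < 1) (hq0 : q ≠ 0) (hQ : Q ^ 2 = q)
    (n : ℕ) (l : List ℂ) (z : Fin n → ℂ) (hz : ∀ i, ‖z i‖ = 1) :
    selbergDensity n (l.flatMap fun x => [x, q * x]) (q ^ 2) p (q ^ 2) z =
    selbergDensity n (l ++ [Q, -Q]) q p q z := by
  unfold selbergDensity
  refine congrArg₂ _ (congrArg₂ _ ?_ ?_) ?_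
  · rw [prefactor_eq hp hq hq0]
  · refine Finset.prod_congr rfl (fun i _ => Finset.prod_congr rfl (fun j _ => ?_))
    by_cases h : i < j
    · simp only [if_pos h]
      exact cross_eq hp hq hq0 (z i) (z j) (hz i) (hz j)
    · simp only [if_neg h]
  · refine Finset.prod_congr rfl (fun i _ => ?_)
    have hpair : ∀ x : ℂ,
        ellGamma p q (x * z i) * ellGamma p q (x / z i) =
        ellGamma p (q ^ 2) (x * z i) * ellGamma p (q ^ 2) (x / z i) *
          (ellGamma p (q ^ 2) (q * x * z i) * ellGamma p (q ^ 2) (q * x / z i)) := by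
      intro x
      rw [gamma_dup hp hq hq0 (x * z i), gamma_dup hp hq hq0 (x / z i),
        show q * (x * z i) = q * x * z i from by ring,
        show q * (x / z i) = q * x / z i from by ring]
      ring
    have hflat : ∀ L : List ℂ,
        ((L.flatMap fun x => [x, q * x]).map
          (fun ur => ellGamma p (q ^ 2) (ur * z i) * ellGamma p (q ^ 2) (ur / z i))).prod =
        (L.map (fun ur => ellGamma p q (ur * z i) * ellGamma p q (ur / z i))).prod := by
      intro L
      induction L with
      | nil => simp
      | cons a L ih =>
        simp only [List.flatMap_cons, List.map_append, List.prod_append, List.map_cons,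
          List.prod_cons, List.map_nil, List.prod_nil, ih]
        rw [hpair a]
        ring
    rw [hflat]
    rw [show ((l ++ [Q, -Q]).map
        (fun ur => ellGamma p q (ur * z i) * ellGamma p q (ur / z i))).prod =
      (l.map (fun ur => ellGamma p q (ur * z i) * ellGamma p q (ur / z i))).prod *
        (ellGamma p q (Q * z i) * ellGamma p q (Q / z i) *
          (ellGamma p q (-Q * z i) * ellGamma p q (-Q / z i))) from by
        simp only [List.map_append, List.prod_append, List.map_cons, List.prod_cons,
          List.map_nil, List.prod_nil]
        ring]
    rw [div_eq_mul_one_div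
      ((l.map (fun ur => ellGamma p q (ur * z i) * ellGamma p q (ur / z i))).prod)
      (ellGamma p (q ^ 2) (z i ^ 2) * ellGamma p (q ^ 2) ((z i ^ 2)⁻¹)),
      peri_eq hp hq hq0 hQ (z i) (hz i)]
    ring

end SelbergAux
end Layer5


/-- Quadratic transformation of higher-order elliptic Selberg integrals, base `q²` versus
base `q` (Proposition `pmq_q` of the paper, extended to `n` variables). -/
theorem selberg_quadratic_base_q (n m : ℕ) (hn : 1 ≤ n) (hm1 : 1 ≤ m) (hm : Odd m)
    (p q Q : ℂ) (hp0 : p ≠ 0) (hp : ‖p‖ < 1)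
    (hq0 : q ≠ 0) (hq : ‖q‖ < 1) (hQ : Q ^ 2 = q)
    (u : Fin (m + 3) → ℂ) (hu0 : ∀ r, u r ≠ 0) (hu1 : ∀ r, ‖u r‖ < 1)
    (hbal : q ^ (2 * n - 1) * ∏ r, u r = -((p * q) ^ ((m + 1) / 2))) :
    unitTorusIntegral n
        (selbergDensity n ((List.ofFn u).flatMap fun x => [x, q * x]) (q ^ 2) p (q ^ 2)) =
    unitTorusIntegral n
        (selbergDensity n (List.ofFn u ++ [Q, -Q]) q p q) := by
  have hp1 : ‖p‖ < 1 := hp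
  have hq1 : ‖q‖ < 1 := hq
  unfold unitTorusIntegral
  congr 1
  refine congrArg _ (funext fun θ => ?_)
  have hz : ∀ i : Fin n, ‖Complex.exp (Complex.I * (θ i : ℂ))‖ = 1 := by
    intro i
    rw [Complex.norm_exp]
    simp
  exact SelbergAux.density_eq hp1 hq1 hq0 hQ n (List.ofFn u) _ hz
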